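/- Let g : [0,∞) → [1,∞) be defined by g(x) = exp(x)/(1+x). Let X : Ω → ℝⁿ be a random vector with mean μ ∈ ℝⁿ that is sub-Gaussian with matrix variance proxy Σ ≻ 0. Then for any δ ∈ (0,1), Pr{ ‖X − μ‖²_{Σ⁻¹} ≤ n + n·g⁻¹(δ^{−2/n}) } ≥ 1 − δ, where g⁻¹ denotes the inverse of g on [0,∞) and ‖x‖²_{Σ⁻¹} := xᵀΣ⁻¹x. -/

import Mathlib

open MeasureTheory Matrix

noncomputable section

/-- A random vector `X` with mean `μ` is sub-Gaussian with matrix variance proxy `S`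
(`X ~ SG(μ, S)`): its moment generating function exists and
`E[exp(λᵀ(X − μ))] ≤ exp(λᵀ S λ / 2)` for all `λ ∈ ℝⁿ`. -/
def IsSubGaussianMat {Ω : Type*} [MeasurableSpace Ω] {n : ℕ} (P : Measure Ω)
    (X : Ω → Fin n → ℝ) (μ : Fin n → ℝ) (S : Matrix (Fin n) (Fin n) ℝ) : Prop :=
  ∀ l : Fin n → ℝ,
    Integrable (fun ω => Real.exp (l ⬝ᵥ (X ω - μ))) P ∧
    ∫ ω, Real.exp (l ⬝ᵥ (X ω - μ)) ∂P ≤ Real.exp ((l ⬝ᵥ (S *ᵥ l)) / 2)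

/-- The function `g(x) = exp(x)/(1+x)`, a strictly increasing bijection from `[0,∞)`
onto `[1,∞)`. -/
def g (x : ℝ) : ℝ := Real.exp x / (1 + x)

/-- The inverse of `g` on `[0, ∞)`. -/
def gInv (y : ℝ) : ℝ := Function.invFunOn g (Set.Ici 0) y

/-!
Whitening reduces everything to the isotropic case: for a symmetric `R` with `Rᵀ R = Σ⁻¹`,
`Z = R (X - μ)` is sub-Gaussian with proxy `I` and `‖X - μ‖²_{Σ⁻¹} = |Z|²`. Writing
`exp (t |z|² / 2)` as a Gaussian average of `exp (√t ⟨z, u⟩)` over `u` and applying the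
sub-Gaussian bound inside Tonelli gives `E exp (t |Z|² / 2) ≤ (1 - t) ^ (-n/2)` for `0 ≤ t < 1`.
Markov's inequality with `t = a / (1 + a)` then bounds `P (|Z|² > n (1 + a))` by `g a ^ (-n/2)`,
which is `δ` for `a = g⁻¹ (δ ^ (-2/n))`.
-/

open Real Set

lemma half_le_g {x : ℝ} (hx : 0 ≤ x) : x / 2 ≤ g x := by
  rw [g, le_div_iff₀ (by linarith)]
  nlinarith [quadratic_le_exp_of_nonneg hx]

lemma exists_mem_Ici_g_eq {y : ℝ} (hy : 1 ≤ y) : ∃ x ∈ Ici (0 : ℝ), g x = y := by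
  have hcont : ContinuousOn g (Icc 0 (2 * y)) :=
    continuous_exp.continuousOn.div (by fun_prop) fun x hx => by linarith [hx.1]
  have hy' : y ∈ Icc (g 0) (g (2 * y)) :=
    ⟨by simpa [g] using hy, by simpa using half_le_g (x := 2 * y) (by linarith)⟩
  obtain ⟨x, hx, hgx⟩ := intermediate_value_Icc (by linarith) hcont hy'
  exact ⟨x, hx.1, hgx⟩

lemma gInv_nonneg {y : ℝ} (hy : 1 ≤ y) : 0 ≤ gInv y :=
  Function.invFunOn_mem (exists_mem_Ici_g_eq hy)

lemma g_gInv {y : ℝ} (hy : 1 ≤ y) : g (gInv y) = y :=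
  Function.invFunOn_eq (exists_mem_Ici_g_eq hy)

lemma integral_exp_dotProduct_sub_mul_dotProduct_self {ι : Type*} [Fintype ι] (w : ι → ℝ)
    {p : ℝ} (hp : 0 < p) :
    ∫ u : ι → ℝ, exp (w ⬝ᵥ u - p * (u ⬝ᵥ u)) =
      (π / p) ^ (Fintype.card ι / 2 : ℝ) * exp (w ⬝ᵥ w / (4 * p)) := by
  apply Complex.ofReal_injective
  rw [← integral_complex_ofReal, Complex.ofReal_mul, Complex.ofReal_cpow (by positivity)]
  convert GaussianFourier.integral_cexp_neg_mul_sum_add (b := (p : ℂ)) (by simpa using hp)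
    (fun i => (w i : ℂ)) using 3 with u
  · rfl
  all_goals push_cast [dotProduct]; ring_nf

lemma lintegral_exp_dotProduct_sub_mul_dotProduct_self {ι : Type*} [Fintype ι] (w : ι → ℝ)
    {p : ℝ} (hp : 0 < p) :
    ∫⁻ u : ι → ℝ, ENNReal.ofReal (exp (w ⬝ᵥ u - p * (u ⬝ᵥ u))) =
      ENNReal.ofReal ((π / p) ^ (Fintype.card ι / 2 : ℝ) * exp (w ⬝ᵥ w / (4 * p))) := by
  have h := integral_exp_dotProduct_sub_mul_dotProduct_self w hp
  have hint : Integrable fun u : ι → ℝ => exp (w ⬝ᵥ u - p * (u ⬝ᵥ u)) :=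
    Integrable.of_integral_ne_zero (by rw [h]; positivity)
  rw [← h, ofReal_integral_eq_lintegral_ofReal hint (ae_of_all _ fun _ => (exp_pos _).le)]

lemma IsSubGaussianMat.mulVec {Ω : Type*} [MeasurableSpace Ω] {m n : ℕ} {P : Measure Ω}
    {X : Ω → Fin n → ℝ} {μ : Fin n → ℝ} {S : Matrix (Fin n) (Fin n) ℝ}
    (h : IsSubGaussianMat P X μ S) (A : Matrix (Fin m) (Fin n) ℝ) :
    IsSubGaussianMat P (fun ω => A *ᵥ X ω) (A *ᵥ μ) (A * S * Aᵀ) := by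
  intro l
  have hlin : ∀ v, l ⬝ᵥ (A *ᵥ v) = (Aᵀ *ᵥ l) ⬝ᵥ v := fun v => by
    rw [dotProduct_mulVec, mulVec_transpose]
  have hquad : l ⬝ᵥ (A * S * Aᵀ) *ᵥ l = (Aᵀ *ᵥ l) ⬝ᵥ S *ᵥ (Aᵀ *ᵥ l) := by
    rw [← mulVec_mulVec, ← mulVec_mulVec, hlin]
  simpa only [← mulVec_sub, hlin, hquad] using h (Aᵀ *ᵥ l)

open scoped MatrixOrder in
lemma Matrix.PosDef.exists_whitening {ι : Type*} [Fintype ι] [DecidableEq ι]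
    {S : Matrix ι ι ℝ} (hS : S.PosDef) :
    ∃ R : Matrix ι ι ℝ, Rᵀ * R = S⁻¹ ∧ R * S * Rᵀ = 1 := by
  have hR := CFC.sqrt_nonneg S⁻¹
  rw [Matrix.nonneg_iff_posSemidef] at hR
  have hsymm : (CFC.sqrt S⁻¹)ᵀ = CFC.sqrt S⁻¹ := by
    simpa [Matrix.IsHermitian, Matrix.conjTranspose_eq_transpose_of_trivial] using hR.isHermitian
  have hsq : CFC.sqrt S⁻¹ * CFC.sqrt S⁻¹ = S⁻¹ :=
    CFC.sqrt_mul_sqrt_self _ (Matrix.nonneg_iff_posSemidef.mpr hS.inv.posSemidef)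
  refine ⟨CFC.sqrt S⁻¹, by rw [hsymm, hsq], ?_⟩
  rw [hsymm, ← mul_eq_one_comm, ← Matrix.mul_assoc, hsq,
    nonsing_inv_mul _ hS.det_pos.ne'.isUnit]

section SubGaussian

variable {Ω : Type*} [MeasurableSpace Ω] {n : ℕ} {P : Measure Ω} {Y : Ω → Fin n → ℝ}
  {ν : Fin n → ℝ}

lemma IsSubGaussianMat.lintegral_exp_dotProduct_le {S : Matrix (Fin n) (Fin n) ℝ}
    (h : IsSubGaussianMat P Y ν S) (l : Fin n → ℝ) :
    ∫⁻ ω, ENNReal.ofReal (exp (l ⬝ᵥ (Y ω - ν))) ∂P ≤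
      ENNReal.ofReal (exp (l ⬝ᵥ S *ᵥ l / 2)) := by
  obtain ⟨hint, hle⟩ := h l
  rw [← ofReal_integral_eq_lintegral_ofReal hint (ae_of_all _ fun _ => (exp_pos _).le)]
  exact ENNReal.ofReal_le_ofReal hle

lemma IsSubGaussianMat.lintegral_exp_smul_dotProduct_sub_le (h : IsSubGaussianMat P Y ν 1)
    (c p : ℝ) (u : Fin n → ℝ) :
    ∫⁻ ω, ENNReal.ofReal (exp ((c • (Y ω - ν)) ⬝ᵥ u - p * (u ⬝ᵥ u))) ∂P ≤
      ENNReal.ofReal (exp (-((p - c ^ 2 / 2) * (u ⬝ᵥ u)))) := by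
  have hsplit (ω : Ω) : ENNReal.ofReal (exp ((c • (Y ω - ν)) ⬝ᵥ u - p * (u ⬝ᵥ u))) =
      ENNReal.ofReal (exp ((c • u) ⬝ᵥ (Y ω - ν))) * ENNReal.ofReal (exp (-(p * (u ⬝ᵥ u)))) := by
    rw [← ENNReal.ofReal_mul (exp_pos _).le, ← exp_add, ← sub_eq_add_neg, smul_dotProduct,
      smul_dotProduct, dotProduct_comm (Y ω - ν)]
  calc ∫⁻ ω, ENNReal.ofReal (exp ((c • (Y ω - ν)) ⬝ᵥ u - p * (u ⬝ᵥ u))) ∂P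
      = (∫⁻ ω, ENNReal.ofReal (exp ((c • u) ⬝ᵥ (Y ω - ν))) ∂P) *
          ENNReal.ofReal (exp (-(p * (u ⬝ᵥ u)))) := by
        simp_rw [hsplit]
        exact lintegral_mul_const' _ _ ENNReal.ofReal_ne_top
    _ ≤ ENNReal.ofReal (exp ((c • u) ⬝ᵥ (1 : Matrix (Fin n) (Fin n) ℝ) *ᵥ (c • u) / 2)) *
          ENNReal.ofReal (exp (-(p * (u ⬝ᵥ u)))) := by
        gcongr
        exact h.lintegral_exp_dotProduct_le _
    _ = _ := by
        rw [← ENNReal.ofReal_mul (exp_pos _).le, ← exp_add, one_mulVec, smul_dotProduct,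
          dotProduct_smul, smul_eq_mul, smul_eq_mul]
        ring_nf

lemma IsSubGaussianMat.lintegral_exp_mul_dotProduct_self_le [SFinite P] (hY : Measurable Y)
    (h : IsSubGaussianMat P Y ν 1) {t : ℝ} (ht0 : 0 ≤ t) (ht1 : t < 1) :
    ∫⁻ ω, ENNReal.ofReal (exp (t * ((Y ω - ν) ⬝ᵥ (Y ω - ν)) / 2)) ∂P ≤
      ENNReal.ofReal ((1 - t) ^ (-(n / 2 : ℝ))) := by
  set C : ℝ := (π / (1 / 2)) ^ (n / 2 : ℝ)
  set F : Ω → (Fin n → ℝ) → ENNReal := fun ω u =>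
    ENNReal.ofReal (exp ((√t • (Y ω - ν)) ⬝ᵥ u - 1 / 2 * (u ⬝ᵥ u)))
  have hF : Measurable (Function.uncurry F) := by
    unfold F Function.uncurry
    fun_prop
  have hF_u (ω : Ω) : ∫⁻ u, F ω u =
      ENNReal.ofReal C * ENNReal.ofReal (exp (t * ((Y ω - ν) ⬝ᵥ (Y ω - ν)) / 2)) := by
    rw [lintegral_exp_dotProduct_sub_mul_dotProduct_self _ one_half_pos, Fintype.card_fin,
      ENNReal.ofReal_mul (by positivity)]
    congr 3
    rw [smul_dotProduct, dotProduct_smul, smul_eq_mul, smul_eq_mul, ← mul_assoc,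
      mul_self_sqrt ht0]
    ring
  have hgauss :
      ∫⁻ u : Fin n → ℝ, ENNReal.ofReal (exp (-((1 / 2 - √t ^ 2 / 2) * (u ⬝ᵥ u)))) =
        ENNReal.ofReal C * ENNReal.ofReal ((1 - t) ^ (-(n / 2 : ℝ))) := by
    have h0 := lintegral_exp_dotProduct_sub_mul_dotProduct_self (0 : Fin n → ℝ)
      (p := (1 - t) / 2) (by linarith)
    simp only [zero_dotProduct, zero_sub, zero_div, exp_zero, mul_one] at h0
    rw [sq_sqrt ht0, show 1 / 2 - t / 2 = (1 - t) / 2 by ring, h0, Fintype.card_fin,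
      ← ENNReal.ofReal_mul (by positivity)]
    congr 1
    rw [show π / ((1 - t) / 2) = π / (1 / 2) * (1 - t)⁻¹ by field_simp,
      mul_rpow (by positivity) (by simp [ht1.le]), inv_rpow (by linarith),
      ← rpow_neg (by linarith)]
  have hC : ENNReal.ofReal C ≠ 0 := (ENNReal.ofReal_pos.mpr (by positivity)).ne'
  rw [← ENNReal.mul_le_mul_iff_right hC ENNReal.ofReal_ne_top]
  calc ENNReal.ofReal C * ∫⁻ ω, ENNReal.ofReal (exp (t * ((Y ω - ν) ⬝ᵥ (Y ω - ν)) / 2)) ∂P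
      = ∫⁻ ω, (∫⁻ u, F ω u) ∂P := by
        simp_rw [hF_u]
        rw [lintegral_const_mul' _ _ ENNReal.ofReal_ne_top]
    _ = ∫⁻ u, ∫⁻ ω, F ω u ∂P := lintegral_lintegral_swap hF.aemeasurable
    _ ≤ _ := lintegral_mono (h.lintegral_exp_smul_dotProduct_sub_le √t (1 / 2))
    _ = _ := hgauss

lemma exp_mul_mul_g_rpow_neg {a : ℝ} (ha : -1 < a) (r : ℝ) :
    exp (a * r) * g a ^ (-r) = (1 - a / (1 + a)) ^ (-r) := by
  have h1a : 0 < 1 + a := by linarith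
  rw [g, show 1 - a / (1 + a) = (exp a / (1 + a)) * exp (-a) by
      rw [exp_neg]; field_simp; ring,
    mul_rpow (by positivity) (exp_pos _).le, ← exp_mul, neg_mul_neg, mul_comm]

lemma IsSubGaussianMat.measure_lt_dotProduct_self_le [SFinite P] (hY : Measurable Y)
    (h : IsSubGaussianMat P Y ν 1) {a : ℝ} (ha : 0 ≤ a) :
    P {ω | n * (1 + a) < (Y ω - ν) ⬝ᵥ (Y ω - ν)} ≤
      ENNReal.ofReal (g a ^ (-(n / 2 : ℝ))) := by
  set t := a / (1 + a)
  have ht0 : 0 ≤ t := by positivity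
  have ht1 : t < 1 := (div_lt_one (by linarith)).mpr (by linarith)
  have hmarkov := mul_meas_ge_le_lintegral₀ (μ := P)
    (f := fun ω => ENNReal.ofReal (exp (t * ((Y ω - ν) ⬝ᵥ (Y ω - ν)) / 2))) (by fun_prop)
    (ENNReal.ofReal (exp (a * (n / 2))))
  have hsub : {ω | n * (1 + a) < (Y ω - ν) ⬝ᵥ (Y ω - ν)} ⊆
      {ω | ENNReal.ofReal (exp (a * (n / 2))) ≤
        ENNReal.ofReal (exp (t * ((Y ω - ν) ⬝ᵥ (Y ω - ν)) / 2))} := fun ω hω => by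
    refine ENNReal.ofReal_le_ofReal (exp_le_exp.mpr ?_)
    have : a * (n / 2) = t * (n * (1 + a)) / 2 := by
      simp only [t]
      field_simp
    rw [this]
    gcongr
    exact hω.le
  have hexp : ENNReal.ofReal (exp (a * (n / 2))) ≠ 0 := by simp [exp_pos]
  rw [← ENNReal.mul_le_mul_iff_right hexp ENNReal.ofReal_ne_top,
    ← ENNReal.ofReal_mul (exp_pos _).le, exp_mul_mul_g_rpow_neg (by linarith)]
  calc _ ≤ _ := mul_le_mul_right (measure_mono hsub) _
    _ ≤ _ := hmarkov
    _ ≤ _ := h.lintegral_exp_mul_dotProduct_self_le hY ht0 ht1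

end SubGaussian

/-- elliptical confidence bound. If `X ~ SG(μ, Σ)` with `Σ ≻ 0`, then for
any `δ ∈ (0,1)`, `Pr{‖X − μ‖²_{Σ⁻¹} ≤ n + n g⁻¹(δ^{−2/n})} ≥ 1 − δ`. -/
theorem subGaussian_elliptical_confidence {Ω : Type*} [MeasurableSpace Ω] {n : ℕ}
    (P : Measure Ω) [IsProbabilityMeasure P]
    (X : Ω → Fin n → ℝ) (hX : Measurable X) (μ : Fin n → ℝ)
    (Sig : Matrix (Fin n) (Fin n) ℝ) (hSig : Sig.PosDef)
    (hsg : IsSubGaussianMat P X μ Sig)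
    (δ : ℝ) (hδ : δ ∈ Set.Ioo (0 : ℝ) 1) :
    ENNReal.ofReal (1 - δ) ≤
      P {ω | (X ω - μ) ⬝ᵥ (Sig⁻¹ *ᵥ (X ω - μ)) ≤
        (n : ℝ) + n * gInv (δ ^ (-(2 : ℝ) / n)) } := by
  obtain ⟨hδ0, hδ1⟩ := hδ
  rcases Nat.eq_zero_or_pos n with rfl | hn
  · simpa [dotProduct] using hδ0.le
  have hy : 1 ≤ δ ^ (-(2 : ℝ) / n) := one_le_rpow_of_pos_of_le_one_of_nonpos hδ0 hδ1.le
    (div_nonpos_of_nonpos_of_nonneg (by norm_num) n.cast_nonneg)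
  have ha := gInv_nonneg hy
  have hga := g_gInv hy
  set a := gInv (δ ^ (-(2 : ℝ) / n))
  obtain ⟨R, hRR, hRSR⟩ := hSig.exists_whitening
  have hY : IsSubGaussianMat P (fun ω => R *ᵥ X ω) (R *ᵥ μ) 1 := hRSR ▸ hsg.mulVec R
  have htail := hY.measure_lt_dotProduct_self_le (by fun_prop) ha
  rw [hga, ← rpow_mul hδ0.le, show -(2 : ℝ) / n * -(n / 2) = 1 by field_simp,
    rpow_one] at htail
  set T := {ω | (X ω - μ) ⬝ᵥ (Sig⁻¹ *ᵥ (X ω - μ)) ≤ (n : ℝ) + n * a}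
  have hTc : Tᶜ = {ω | n * (1 + a) < (R *ᵥ X ω - R *ᵥ μ) ⬝ᵥ (R *ᵥ X ω - R *ᵥ μ)} := by
    ext ω
    rw [Set.mem_compl_iff, Set.mem_ofPred_eq, Set.mem_ofPred_eq, not_le, ← hRR,
      ← mulVec_mulVec, dotProduct_transpose_mulVec, mulVec_sub, mul_one_add]
  calc ENNReal.ofReal (1 - δ) = 1 - ENNReal.ofReal δ := by
        rw [ENNReal.ofReal_sub _ hδ0.le, ENNReal.ofReal_one]
    _ ≤ 1 - P Tᶜ := tsub_le_tsub_left (hTc ▸ htail) 1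
    _ ≤ P T := tsub_le_iff_right.mpr (measure_univ (μ := P) ▸ measure_univ_le_add_compl T)
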